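/- For any type Q of length-N sequences over a finite alphabet X and any probability distribution G on X with full support, G^N(T_Q^N) ≥ (N+1)^{-|X|} · exp(-N·D(Q‖G)). -/

import Mathlib

/-!
Under `G^N` a sequence of type `Q` has probability `∏ₐ G a ^ nₐ = exp (-N D(Q‖G)) ∏ₐ Q a ^ nₐ`,
where `nₐ = N Q a`, so `G^N(T_Q) = exp (-N D(Q‖G)) · Q^N(T_Q)`. The type class `T_Q` is an orbit of
the permutations of the positions, with stabilizer `∏ₐ Perm {i // x i = a}`, so it has
`multinomial n` elements. By the multinomial theorem `1 = ∑ₖ multinomial k ∏ₐ Q a ^ kₐ`, summed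
over the at most `(N+1)^|X|` count vectors `k` with `∑ k = N`, and the summand `k = n` is the
largest since `nₐ! nₐ^kₐ ≤ kₐ! nₐ^nₐ`. Hence `Q^N(T_Q) ≥ (N+1)^{-|X|}`.
-/

/-- The empirical distribution (type) of a sequence `x : Fin N → X`. -/
noncomputable def empDist {X : Type*} [Fintype X] [DecidableEq X] {N : ℕ}
    (x : Fin N → X) : X → ℝ :=
  fun a => ((Finset.univ.filter (fun n => x n = a)).card : ℝ) / N

/-- Kullback–Leibler divergence of `Q` from `G` on a finite set. -/
noncomputable def dKL {X : Type*} [Fintype X] (Q G : X → ℝ) : ℝ :=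
  ∑ a, Q a * Real.log (Q a / G a)

/-- `G` is a probability distribution on a finite set. -/
def IsProb {X : Type*} [Fintype X] (G : X → ℝ) : Prop :=
  (∀ a, 0 ≤ G a) ∧ ∑ a, G a = 1

open Finset Nat Real

section Occurrences

variable {ι X : Type*} [Fintype ι] [DecidableEq X]

def occurrences (x : ι → X) (a : X) : ℕ := #{i | x i = a}

lemma sum_occurrences [Fintype X] (x : ι → X) : ∑ a, occurrences x a = Fintype.card ι := by
  simpa [occurrences] using (card_eq_sum_card_fiberwise (f := x) (s := univ) (t := univ)
    fun _ _ => mem_univ _).symm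

lemma prod_comp_eq_prod_pow_occurrences [Fintype X] {M : Type*} [CommMonoid M] (x : ι → X)
    (f : X → M) : ∏ i, f (x i) = ∏ a, f a ^ occurrences x a := by
  simp [← prod_fiberwise' univ x f, occurrences]

lemma occurrences_comp_perm (x : ι → X) (σ : Equiv.Perm ι) :
    occurrences (x ∘ σ) = occurrences x := by
  funext a
  exact card_equiv σ (by simp)

lemma exists_perm_comp_eq_of_occurrences_eq {x y : ι → X} (h : occurrences x = occurrences y) :
    ∃ σ : Equiv.Perm ι, y ∘ σ = x := by
  have e : ∀ a, {i // x i = a} ≃ {i // y i = a} := fun a =>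
    Fintype.equivOfCardEq (by simpa [occurrences, Fintype.card_subtype] using congrFun h a)
  exact ⟨Equiv.ofFiberEquiv e, funext (Equiv.ofFiberEquiv_map e)⟩

open MulAction in
lemma mem_orbit_iff_occurrences_eq {x y : ι → X} :
    x ∈ orbit (Equiv.Perm ι)ᵈᵐᵃ y ↔ occurrences x = occurrences y := by
  constructor
  · rintro ⟨σ, rfl⟩
    exact occurrences_comp_perm y (DomMulAct.mk.symm σ)
  · intro h
    obtain ⟨σ, rfl⟩ := exists_perm_comp_eq_of_occurrences_eq h
    exact ⟨DomMulAct.mk σ, rfl⟩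

open MulAction in
theorem card_filter_occurrences_eq [DecidableEq ι] [Fintype X] (y : ι → X) :
    #{x : ι → X | occurrences x = occurrences y} = multinomial univ (occurrences y) := by
  have horbit :
      Nat.card (orbit (Equiv.Perm ι)ᵈᵐᵃ y) = #{x : ι → X | occurrences x = occurrences y} := by
    rw [← Nat.card_eq_finsetCard]
    exact Nat.card_congr (Equiv.setCongr (by ext x; simp [mem_orbit_iff_occurrences_eq]))
  have hstab : Nat.card (stabilizer (Equiv.Perm ι)ᵈᵐᵃ y) = ∏ a, (occurrences y a)! := by
    rw [Nat.card_congr (Equiv.subtypeEquiv (q := fun σ : Equiv.Perm ι => y ∘ σ = y)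
        DomMulAct.mk.symm fun _ => DomMulAct.mem_stabilizer_iff),
      Nat.card_eq_fintype_card, DomMulAct.stabilizer_card]
    simp [occurrences, Fintype.card_subtype]
  have horbit_stab :
      Nat.card (orbit (Equiv.Perm ι)ᵈᵐᵃ y) * Nat.card (stabilizer (Equiv.Perm ι)ᵈᵐᵃ y)
        = (Fintype.card ι)! := by
    rw [← Nat.card_prod, Nat.card_congr (orbitProdStabilizerEquivGroup _ y),
      Nat.card_congr DomMulAct.mk.symm, Nat.card_perm, Nat.card_eq_fintype_card]
  apply Nat.eq_of_mul_eq_mul_right (prod_pos fun a _ => (occurrences y a).factorial_pos)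
  rw [← horbit, ← hstab, horbit_stab, hstab, mul_comm, multinomial_spec, sum_occurrences]

end Occurrences

section Multinomial

theorem Nat.factorial_mul_pow_le_factorial_mul_pow (m k : ℕ) : m ! * m ^ k ≤ k ! * m ^ m := by
  rcases le_total m k with hmk | hkm
  · calc m ! * m ^ k = m ! * m ^ (k - m) * m ^ m := by
          rw [mul_assoc, ← pow_add, Nat.sub_add_cancel hmk]
      _ ≤ k ! * m ^ m := Nat.mul_le_mul_right _ (factorial_mul_pow_sub_le_factorial hmk)
  · calc m ! * m ^ k = k ! * m.descFactorial (m - k) * m ^ k := by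
          rw [← factorial_mul_descFactorial (Nat.sub_le m k), Nat.sub_sub_self hkm]
      _ ≤ k ! * m ^ (m - k) * m ^ k := by gcongr; exact descFactorial_le_pow m _
      _ = k ! * m ^ m := by rw [mul_assoc, ← pow_add, Nat.sub_add_cancel hkm]

theorem Nat.multinomial_mul_prod_pow_le {α : Type*} (s : Finset α) {k n : α → ℕ}
    (h : ∑ a ∈ s, k a = ∑ a ∈ s, n a) :
    multinomial s k * ∏ a ∈ s, n a ^ k a ≤ multinomial s n * ∏ a ∈ s, n a ^ n a := by
  have hk := prod_pos fun a (_ : a ∈ s) => (k a).factorial_pos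
  have hn := prod_pos fun a (_ : a ∈ s) => (n a).factorial_pos
  refine Nat.le_of_mul_le_mul_right ?_ (Nat.mul_pos hk hn)
  calc (multinomial s k * ∏ a ∈ s, n a ^ k a) * ((∏ a ∈ s, (k a)!) * ∏ a ∈ s, (n a)!)
      = (∑ a ∈ s, k a)! * ∏ a ∈ s, ((n a)! * n a ^ k a) := by
        rw [← multinomial_spec, prod_mul_distrib]; ring
    _ ≤ (∑ a ∈ s, n a)! * ∏ a ∈ s, ((k a)! * n a ^ n a) := by
        rw [h]
        exact Nat.mul_le_mul_left _
          (prod_le_prod' fun a _ => factorial_mul_pow_le_factorial_mul_pow _ _)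
    _ = (multinomial s n * ∏ a ∈ s, n a ^ n a) * ((∏ a ∈ s, (k a)!) * ∏ a ∈ s, (n a)!) := by
        rw [← multinomial_spec, prod_mul_distrib]; ring

variable {α : Type*} [Fintype α] [DecidableEq α]

theorem Finset.card_piAntidiag_univ_le (N : ℕ) :
    #(piAntidiag (univ : Finset α) N) ≤ (N + 1) ^ Fintype.card α := by
  calc #(piAntidiag (univ : Finset α) N) ≤ #(Fintype.piFinset fun _ : α => range (N + 1)) := by
        refine card_le_card fun k hk => ?_
        rw [mem_piAntidiag] at hk
        simp only [Fintype.mem_piFinset, mem_range, Nat.lt_succ_iff]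
        exact fun a => hk.1 ▸ single_le_sum (fun _ _ => Nat.zero_le _) (mem_univ a)
    _ = (N + 1) ^ Fintype.card α := by simp

theorem Nat.sum_pow_sum_le_mul_multinomial_mul_prod_pow (n : α → ℕ) :
    (∑ a, n a) ^ (∑ a, n a)
      ≤ (∑ a, n a + 1) ^ Fintype.card α * (multinomial univ n * ∏ a, n a ^ n a) := by
  calc (∑ a, n a) ^ (∑ a, n a)
      = ∑ k ∈ piAntidiag univ (∑ a, n a), multinomial univ k * ∏ a, n a ^ k a :=
        sum_pow_eq_sum_piAntidiag _ _ _
    _ ≤ ∑ _k ∈ piAntidiag univ (∑ a, n a), multinomial univ n * ∏ a, n a ^ n a :=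
        sum_le_sum fun k hk => multinomial_mul_prod_pow_le _ (mem_piAntidiag.mp hk).1
    _ ≤ _ := by
        rw [sum_const, smul_eq_mul]
        gcongr
        exact card_piAntidiag_univ_le _

theorem inv_le_multinomial_mul_prod_div_pow (n : α → ℕ) :
    (((∑ a, n a : ℕ) + 1 : ℝ) ^ Fintype.card α)⁻¹
      ≤ multinomial univ n * ∏ a, ((n a : ℝ) / (∑ a, n a : ℕ)) ^ n a := by
  have hpow : (0 : ℝ) < ((∑ a, n a : ℕ) : ℝ) ^ (∑ a, n a) := by exact_mod_cast Nat.pow_self_pos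
  rw [prod_congr rfl fun a _ => div_pow _ _ _, prod_div_distrib, prod_pow_eq_pow_sum,
    ← mul_div_assoc, le_div_iff₀ hpow, inv_mul_le_iff₀ (by positivity)]
  exact_mod_cast sum_pow_sum_le_mul_multinomial_mul_prod_pow n

end Multinomial

section Divergence

variable {X : Type*} [Fintype X]

theorem exp_neg_mul_log_div_mul_pow {q g : ℝ} (hq : 0 < q) (hg : 0 < g) (k : ℕ) :
    exp (-(k * log (q / g))) * q ^ k = g ^ k := by
  rw [← mul_neg, ← log_inv, inv_div, exp_nat_mul, exp_log (div_pos hg hq), div_pow,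
    div_mul_cancel₀ _ (pow_ne_zero _ hq.ne')]

theorem exp_neg_mul_dKL_mul_prod_pow {Q G : X → ℝ} {n : X → ℕ} (N : ℕ)
    (hQ : ∀ a, (N : ℝ) * Q a = n a) (hG : ∀ a, 0 < G a) :
    exp (-(N * dKL Q G)) * ∏ a, Q a ^ n a = ∏ a, G a ^ n a := by
  have hNdKL : (N : ℝ) * dKL Q G = ∑ a, (n a : ℝ) * log (Q a / G a) := by
    simp only [dKL, mul_sum, ← mul_assoc, hQ]
  rw [hNdKL, ← sum_neg_distrib, exp_sum, ← prod_mul_distrib]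
  refine prod_congr rfl fun a _ => ?_
  rcases Nat.eq_zero_or_pos (n a) with hn | hn
  · simp [hn]
  · have hQa : 0 < Q a := by
      have : (0 : ℝ) < N * Q a := by rw [hQ]; exact_mod_cast hn
      exact pos_of_mul_pos_right this (Nat.cast_nonneg N)
    exact exp_neg_mul_log_div_mul_pow hQa (hG a) _

variable [DecidableEq X] {N : ℕ}

theorem empDist_apply (x : Fin N → X) (a : X) : empDist x a = occurrences x a / N := rfl

theorem natCast_mul_empDist (x : Fin N → X) (a : X) : N * empDist x a = occurrences x a := by
  rcases Nat.eq_zero_or_pos N with rfl | hN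
  · simp [empDist_apply, occurrences]
  · rw [empDist_apply, mul_div_cancel₀ _ (by positivity)]

theorem empDist_eq_empDist_iff {x y : Fin N → X} :
    empDist x = empDist y ↔ occurrences x = occurrences y := by
  rcases Nat.eq_zero_or_pos N with rfl | hN
  · simp [Subsingleton.elim x y]
  · simp only [funext_iff, empDist_apply,
      div_left_inj' (Nat.cast_ne_zero.mpr hN.ne' : (N : ℝ) ≠ 0), Nat.cast_inj]

end Divergence

theorem prob_type_class_lower_general (X : Type*) [Fintype X] [DecidableEq X] (N : ℕ)
    (G : X → ℝ) (hGpos : ∀ a, 0 < G a)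
    (Q : X → ℝ) (hQ : ∃ x : Fin N → X, empDist x = Q) :
    (((N : ℝ) + 1) ^ Fintype.card X)⁻¹ * Real.exp (-(N * dKL Q G))
      ≤ ∑ x ∈ Finset.univ.filter (fun x : Fin N → X => empDist x = Q), ∏ n, G (x n) := by
  obtain ⟨y, rfl⟩ := hQ
  have hN : ∑ a, occurrences y a = N := by rw [sum_occurrences, Fintype.card_fin]
  have hclass : ∑ x ∈ univ.filter (fun x : Fin N → X => empDist x = empDist y), ∏ n, G (x n)
      = multinomial univ (occurrences y) * ∏ a, G a ^ occurrences y a := by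
    simp_rw [empDist_eq_empDist_iff]
    rw [sum_congr rfl fun x hx => by rw [prod_comp_eq_prod_pow_occurrences, (mem_filter.mp hx).2],
      sum_const, card_filter_occurrences_eq, nsmul_eq_mul]
  rw [hclass, ← exp_neg_mul_dKL_mul_prod_pow N (natCast_mul_empDist y) hGpos, mul_comm (exp _),
    ← mul_assoc]
  gcongr
  simpa only [hN, empDist_apply] using inv_le_multinomial_mul_prod_div_pow (occurrences y)

/-- Lower bound for the i.i.d. probability of a type class:
`G^N(T_Q^N) ≥ (N+1)^{-|X|} exp(-N D(Q‖G))`. -/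
theorem prob_type_class_lower (X : Type*) [Fintype X] [DecidableEq X] (N : ℕ) (hN : 0 < N)
    (G : X → ℝ) (hG : IsProb G) (hGpos : ∀ a, 0 < G a)
    (Q : X → ℝ) (hQ : ∃ x : Fin N → X, empDist x = Q) :
    (((N : ℝ) + 1) ^ Fintype.card X)⁻¹ * Real.exp (-(N * dKL Q G))
      ≤ ∑ x ∈ Finset.univ.filter (fun x : Fin N → X => empDist x = Q), ∏ n, G (x n) :=
  prob_type_class_lower_general X N G hGpos Q hQ
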